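/- arXiv:1410.0405 — 2 statements merged into one kernel-verified Lean document; each statement's English description precedes it below -/
import Mathlib

section
/- Let Ω ⊂ ℝⁿ be a compact set, let f : ℝⁿ → ℝⁿ, q : ℝⁿ → ℝ, and Σ : ℝⁿ → ℝ^{n×n} be functions such that q(x) > 0 for all x ∈ Ω and Σ(x) is a symmetric positive semidefinite matrix for all x ∈ Ω, and let λ > 0. Define the operator L(Ψ)(x) = f(x)ᵀ∇Ψ(x) + (1/2)Tr(∇²Ψ(x)Σ(x)). Suppose Ψ* and Ψ_u are twice continuously differentiable on an open set containing Ω, that (1/λ)q(x)Ψ*(x) − L(Ψ*)(x) = 0 for all x in the interior of Ω, that (1/λ)q(x)Ψ_u(x) − L(Ψ_u)(x) ≥ 0 for all x in the interior of Ω, and that Ψ_u(x) ≥ Ψ*(x) for all x on the boundary ∂Ω. Then Ψ_u(x) ≥ Ψ*(x) for all x ∈ Ω. (Theorem 5, classical-solution version: a supersolution of the relaxed linear HJB PDE is a pointwise upper bound of the exact solution.) -/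
/-!
Weak maximum principle. Let `w = Ψ* - Ψ_u`; by linearity of `L`, `(q/λ) w - L w ≤ 0` in the
interior of `Ω`. Let `x₀` maximise `w` over the compact set `Ω`. If `x₀` is interior, then
`∇w(x₀) = 0` and the Hessian `∇²w(x₀)` is negative semidefinite, so `Tr(∇²w(x₀) Σ(x₀)) ≤ 0`
because `Σ(x₀)` is positive semidefinite. Hence `(q/λ) w(x₀) ≤ L w(x₀) ≤ 0`, and `q > 0` gives
`w(x₀) ≤ 0`. Otherwise `x₀ ∈ ∂Ω`, where `w ≤ 0` by hypothesis.
-/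

open Matrix Filter Topology Set

/-- Gradient of a scalar function on `ℝⁿ`, as a vector of directional derivatives. -/
noncomputable def grad {n : ℕ} (Ψ : (Fin n → ℝ) → ℝ) (x : Fin n → ℝ) : Fin n → ℝ :=
  fun i => fderiv ℝ Ψ x (Pi.single i 1)

/-- Hessian matrix of a scalar function on `ℝⁿ`. -/
noncomputable def hess {n : ℕ} (Ψ : (Fin n → ℝ) → ℝ) (x : Fin n → ℝ) :
    Matrix (Fin n) (Fin n) ℝ :=
  Matrix.of fun i j => fderiv ℝ (fun y => fderiv ℝ Ψ y (Pi.single j 1)) x (Pi.single i 1)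

/-- The linear HJB operator `L(Ψ)(x) = f(x)ᵀ∇Ψ(x) + (1/2) Tr(∇²Ψ(x) Σ(x))`. -/
noncomputable def hjbL {n : ℕ} (f : (Fin n → ℝ) → Fin n → ℝ)
    (Sig : (Fin n → ℝ) → Matrix (Fin n) (Fin n) ℝ)
    (Ψ : (Fin n → ℝ) → ℝ) (x : Fin n → ℝ) : ℝ :=
  f x ⬝ᵥ grad Ψ x + (1 / 2) * (hess Ψ x * Sig x).trace

theorem ContDiffAt.differentiableAt_fderiv {E F : Type*} [NormedAddCommGroup E]
    [NormedSpace ℝ E] [NormedAddCommGroup F] [NormedSpace ℝ F] {w : E → F} {x : E}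
    (hw : ContDiffAt ℝ 2 w x) : DifferentiableAt ℝ (fderiv ℝ w) x :=
  (hw.fderiv_right (m := 1) (by norm_num)).differentiableAt (by simp)

theorem IsLocalMax.deriv_deriv_nonpos {g : ℝ → ℝ} {t : ℝ} (h : IsLocalMax g t)
    (hc : ContinuousAt g t) : deriv (deriv g) t ≤ 0 := by
  by_contra! hpos
  -- the second derivative test makes `t` also a local minimum, so `g` is locally constant
  have hconst : g =ᶠ[𝓝 t] fun _ => g t :=
    ((isLocalMin_of_deriv_deriv_pos hpos h.deriv_eq_zero hc).and h).mono
      fun _ hy => le_antisymm hy.2 hy.1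
  have hderiv : deriv g =ᶠ[𝓝 t] fun _ => 0 :=
    hconst.eventuallyEq_nhds.mono fun _ hy => by rw [hy.deriv_eq, deriv_const]
  rw [hderiv.deriv_eq, deriv_const] at hpos
  exact hpos.false

theorem IsLocalMax.fderiv_fderiv_apply_self_nonpos {E : Type*} [NormedAddCommGroup E]
    [NormedSpace ℝ E] {w : E → ℝ} {x : E} (h : IsLocalMax w x) (hw : ContDiffAt ℝ 2 w x)
    (v : E) : fderiv ℝ (fderiv ℝ w) x v v ≤ 0 := by
  set line : ℝ → E := fun t => x + t • v
  have hline : ∀ t, HasDerivAt line v t := fun t =>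
    (((hasDerivAt_id t).smul_const v).const_add x).congr_deriv (one_smul ℝ v)
  have hline0 : line 0 = x := by simp [line]
  rw [← hline0] at h hw ⊢
  have hderiv : deriv (w ∘ line) =ᶠ[𝓝 0] fun t => fderiv ℝ w (line t) v := by
    filter_upwards [(hline 0).continuousAt.eventually (hw.eventually (by simp))] with t ht
    exact ((ht.differentiableAt (by simp)).hasFDerivAt.comp_hasDerivAt t (hline t)).deriv
  have hsecond : HasDerivAt (fun t => fderiv ℝ w (line t) v)
      (fderiv ℝ (fderiv ℝ w) (line 0) v v) 0 :=
    (ContinuousLinearMap.apply ℝ ℝ v).hasFDerivAt.comp_hasDerivAt 0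
      (hw.differentiableAt_fderiv.hasFDerivAt.comp_hasDerivAt 0 (hline 0))
  have := (h.comp_continuous (hline 0).continuousAt).deriv_deriv_nonpos
    (hw.continuousAt.comp (hline 0).continuousAt)
  rwa [hderiv.deriv_eq, hsecond.deriv] at this

lemma Matrix.trace_mul_nonpos_of_posSemidef {ι : Type*} [Fintype ι] {H S : Matrix ι ι ℝ}
    (hH : ∀ v, v ⬝ᵥ (H *ᵥ v) ≤ 0) (hS : S.PosSemidef) : (H * S).trace ≤ 0 := by
  classical
  open scoped MatrixOrder in
  obtain ⟨B, rfl⟩ := CStarAlgebra.nonneg_iff_eq_star_mul_self.mp hS.nonneg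
  rw [← Matrix.mul_assoc, trace_mul_cycle, trace]
  refine Finset.sum_nonpos fun i _ => ?_
  simpa [mul_mul_apply, star_eq_conjTranspose, conjTranspose_eq_transpose_of_trivial] using hH (B i)

section Euclidean

variable {n : ℕ} {f : (Fin n → ℝ) → Fin n → ℝ} {Sig : (Fin n → ℝ) → Matrix (Fin n) (Fin n) ℝ}
  {Ψ Ψ₁ Ψ₂ w : (Fin n → ℝ) → ℝ} {x : Fin n → ℝ}

lemma hess_apply_eq_fderiv_fderiv (h : DifferentiableAt ℝ (fderiv ℝ Ψ) x) (i j : Fin n) :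
    hess Ψ x i j = fderiv ℝ (fderiv ℝ Ψ) x (Pi.single i 1) (Pi.single j 1) := by
  simp [hess, fderiv_clm_apply h (differentiableAt_const _)]

lemma dotProduct_hess_mulVec (h : DifferentiableAt ℝ (fderiv ℝ Ψ) x) (v : Fin n → ℝ) :
    v ⬝ᵥ (hess Ψ x *ᵥ v) = fderiv ℝ (fderiv ℝ Ψ) x v v := by
  conv_rhs => rw [pi_eq_sum_univ' v]
  simp only [dotProduct, mulVec, hess_apply_eq_fderiv_fderiv h, map_sum, map_smul,
    _root_.sum_apply, _root_.smul_apply, smul_eq_mul, Finset.mul_sum]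
  rw [Finset.sum_comm]
  exact Finset.sum_congr rfl fun i _ => Finset.sum_congr rfl fun j _ => by ring

lemma grad_sub (h₁ : DifferentiableAt ℝ Ψ₁ x) (h₂ : DifferentiableAt ℝ Ψ₂ x) :
    grad (Ψ₁ - Ψ₂) x = grad Ψ₁ x - grad Ψ₂ x := by
  ext i
  simp [grad, fderiv_sub h₁ h₂]

lemma hess_sub (h₁ : ContDiffAt ℝ 2 Ψ₁ x) (h₂ : ContDiffAt ℝ 2 Ψ₂ x) :
    hess (Ψ₁ - Ψ₂) x = hess Ψ₁ x - hess Ψ₂ x := by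
  have hfderiv : fderiv ℝ (Ψ₁ - Ψ₂) =ᶠ[𝓝 x] fderiv ℝ Ψ₁ - fderiv ℝ Ψ₂ := by
    filter_upwards [h₁.eventually (by simp), h₂.eventually (by simp)] with y hy₁ hy₂
    exact fderiv_sub (hy₁.differentiableAt (by simp)) (hy₂.differentiableAt (by simp))
  ext i j
  rw [Matrix.sub_apply,
    hess_apply_eq_fderiv_fderiv (Ψ := Ψ₁ - Ψ₂) (h₁.sub h₂).differentiableAt_fderiv,
    hess_apply_eq_fderiv_fderiv h₁.differentiableAt_fderiv,
    hess_apply_eq_fderiv_fderiv h₂.differentiableAt_fderiv, hfderiv.fderiv_eq,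
    fderiv_sub h₁.differentiableAt_fderiv h₂.differentiableAt_fderiv]
  rfl

lemma hjbL_sub (h₁ : ContDiffAt ℝ 2 Ψ₁ x) (h₂ : ContDiffAt ℝ 2 Ψ₂ x) :
    hjbL f Sig (Ψ₁ - Ψ₂) x = hjbL f Sig Ψ₁ x - hjbL f Sig Ψ₂ x := by
  rw [hjbL, hjbL, hjbL, grad_sub (h₁.differentiableAt (by simp)) (h₂.differentiableAt (by simp)),
    hess_sub h₁ h₂, dotProduct_sub, Matrix.sub_mul, trace_sub]
  ring

lemma hjbL_nonpos_of_isLocalMax (hmax : IsLocalMax w x) (hw : ContDiffAt ℝ 2 w x)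
    (hSig : (Sig x).PosSemidef) : hjbL f Sig w x ≤ 0 := by
  have hgrad : grad w x = 0 := by
    ext i
    simp [grad, hmax.fderiv_eq_zero]
  have htrace : (hess w x * Sig x).trace ≤ 0 := by
    refine trace_mul_nonpos_of_posSemidef (fun v => ?_) hSig
    rw [dotProduct_hess_mulVec hw.differentiableAt_fderiv]
    exact hmax.fderiv_fderiv_apply_self_nonpos hw v
  rw [hjbL, hgrad, dotProduct_zero]
  linarith

theorem nonpos_of_sub_hjbL_nonpos {Ω : Set (Fin n → ℝ)} (hΩ : IsCompact Ω)
    {c : (Fin n → ℝ) → ℝ} (hc : ∀ x ∈ interior Ω, 0 < c x)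
    (hSig : ∀ x ∈ interior Ω, (Sig x).PosSemidef) (hcont : ContinuousOn w Ω)
    (hw : ∀ x ∈ interior Ω, ContDiffAt ℝ 2 w x)
    (hsub : ∀ x ∈ interior Ω, c x * w x - hjbL f Sig w x ≤ 0)
    (hbdry : ∀ x ∈ frontier Ω, w x ≤ 0) :
    ∀ x ∈ Ω, w x ≤ 0 := by
  intro x hx
  obtain ⟨x₀, hx₀, hmax⟩ := hΩ.exists_isMaxOn ⟨x, hx⟩ hcont
  refine (hmax hx).trans ?_
  by_cases hint : x₀ ∈ interior Ω
  · have hL : hjbL f Sig w x₀ ≤ 0 := hjbL_nonpos_of_isLocalMax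
      (hmax.isLocalMax (mem_interior_iff_mem_nhds.mp hint)) (hw x₀ hint) (hSig x₀ hint)
    exact nonpos_of_mul_nonpos_right (by linarith [hsub x₀ hint]) (hc x₀ hint)
  · exact hbdry x₀ (hΩ.isClosed.frontier_eq ▸ ⟨hx₀, hint⟩)

end Euclidean

/-- Theorem 5 (classical-solution version): a classical supersolution of the relaxed
linear HJB PDE that lies above the exact solution on the boundary is a pointwise upper
bound of the exact solution on all of `Ω`. -/
theorem hjb_supersolution_pointwise_upper_bound
    {n : ℕ} (Ω : Set (Fin n → ℝ)) (hΩ : IsCompact Ω)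
    (f : (Fin n → ℝ) → Fin n → ℝ) (q : (Fin n → ℝ) → ℝ)
    (Sig : (Fin n → ℝ) → Matrix (Fin n) (Fin n) ℝ)
    (hq : ∀ x ∈ Ω, 0 < q x)
    (hSig : ∀ x ∈ Ω, (Sig x).PosSemidef)
    (lam : ℝ) (hlam : 0 < lam)
    (Ψstar Ψu : (Fin n → ℝ) → ℝ)
    (hΨstar : ∃ U : Set (Fin n → ℝ), IsOpen U ∧ Ω ⊆ U ∧ ContDiffOn ℝ 2 Ψstar U)
    (hΨu : ∃ U : Set (Fin n → ℝ), IsOpen U ∧ Ω ⊆ U ∧ ContDiffOn ℝ 2 Ψu U)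
    (hpde : ∀ x ∈ interior Ω,
      (1 / lam) * q x * Ψstar x - hjbL f Sig Ψstar x = 0)
    (hsuper : ∀ x ∈ interior Ω,
      0 ≤ (1 / lam) * q x * Ψu x - hjbL f Sig Ψu x)
    (hbdry : ∀ x ∈ frontier Ω, Ψstar x ≤ Ψu x) :
    ∀ x ∈ Ω, Ψstar x ≤ Ψu x := by
  intro x hx
  obtain ⟨U₁, hU₁, hΩU₁, hΨstar⟩ := hΨstar
  obtain ⟨U₂, hU₂, hΩU₂, hΨu⟩ := hΨu
  have hstar : ∀ y ∈ Ω, ContDiffAt ℝ 2 Ψstar y := fun y hy =>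
    hΨstar.contDiffAt (hU₁.mem_nhds (hΩU₁ hy))
  have hu : ∀ y ∈ Ω, ContDiffAt ℝ 2 Ψu y := fun y hy => hΨu.contDiffAt (hU₂.mem_nhds (hΩU₂ hy))
  have hsub : ∀ y ∈ interior Ω,
      (1 / lam) * q y * (Ψstar - Ψu) y - hjbL f Sig (Ψstar - Ψu) y ≤ 0 := fun y hy => by
    rw [hjbL_sub (hstar y (interior_subset hy)) (hu y (interior_subset hy)), Pi.sub_apply]
    linarith [hpde y hy, hsuper y hy]
  have hw := nonpos_of_sub_hjbL_nonpos hΩ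
    (fun y hy => mul_pos (one_div_pos.mpr hlam) (hq y (interior_subset hy)))
    (fun y hy => hSig y (interior_subset hy))
    (fun y hy => ((hstar y hy).sub (hu y hy)).continuousAt.continuousWithinAt)
    (fun y hy => (hstar y (interior_subset hy)).sub (hu y (interior_subset hy))) hsub
    (fun y hy => sub_nonpos.mpr (hbdry y hy))
  exact sub_nonpos.mp (hw x hx)
end

section
/- Let λ > 0, let x ∈ ℝⁿ, and let Ψ : ℝⁿ → ℝ be twice continuously differentiable and positive on a neighborhood of x. Let q ≥ 0 be a real number, f ∈ ℝⁿ, G ∈ ℝ^{n×m}, B ∈ ℝ^{n×l}, let R ∈ ℝ^{m×m} be symmetric positive definite and Σ_ε ∈ ℝ^{l×l} symmetric positive semidefinite, and assume λ·G R⁻¹ Gᵀ = B Σ_ε Bᵀ =: Σ (so Σ is positive semidefinite). Suppose the relaxed linear HJB inequality holds at x: (1/λ)·q·Ψ(x) − fᵀ∇Ψ(x) − (1/2)Tr(∇²Ψ(x)·Σ) ≤ 0. Define V = −λ log Ψ and u = −R⁻¹Gᵀ∇V(x). Then ∇V(x)ᵀ(f + Gu) + (1/2)Tr(∇²V(x)·B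 Σ_ε Bᵀ) ≤ −q − (λ/(2Ψ(x)²))·∇Ψ(x)ᵀ Σ ∇Ψ(x) ≤ 0. (Key inequality in the proof of Theorem 7 that V_u = −λ log Ψ_l is a stochastic control Lyapunov function: the generator of V along the controlled dynamics is nonpositive.) -/
open Matrix

/-!
Write `p = ∇Ψ(x)`. The logarithmic transform gives `∇V = -(λ/Ψ) p` and
`∇²V = -(λ/Ψ) ∇²Ψ + (λ/Ψ²) p pᵀ`, and the compatibility condition turns the feedback into
`G u = -(1/λ) Σ ∇V`. Substituting, the drift contributes `-(λ/Ψ²) pᵀΣp` and the Hessian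
`(λ/(2Ψ²)) pᵀΣp`, so the generator equals `-(λ/Ψ)(fᵀp + ½ Tr(∇²Ψ Σ)) - (λ/(2Ψ²)) pᵀΣp`.
The relaxed HJB inequality bounds the first term by `-q`, and `Σ ⪰ 0` makes the second
nonpositive.
-/

open Filter Topology

section Calculus

variable {n : ℕ} {Ψ : (Fin n → ℝ) → ℝ} {x : Fin n → ℝ}

theorem grad_comp {g : ℝ → ℝ} {g' : ℝ} (hg : HasDerivAt g g' (Ψ x))
    (hΨ : DifferentiableAt ℝ Ψ x) : grad (g ∘ Ψ) x = g' • grad Ψ x := by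
  ext i
  simp [grad, (hg.comp_hasFDerivAt x hΨ.hasFDerivAt).fderiv]

theorem hess_comp {g g' : ℝ → ℝ} {g'' : ℝ}
    (hg : ∀ᶠ t in 𝓝 (Ψ x), HasDerivAt g (g' t) t) (hg' : HasDerivAt g' g'' (Ψ x))
    (hΨ : ContDiffAt ℝ 2 Ψ x) :
    hess (g ∘ Ψ) x = g' (Ψ x) • hess Ψ x + g'' • vecMulVec (grad Ψ x) (grad Ψ x) := by
  have hΨ1 : DifferentiableAt ℝ Ψ x := hΨ.differentiableAt two_ne_zero
  have hfderiv : ∀ᶠ y in 𝓝 x, fderiv ℝ (g ∘ Ψ) y = g' (Ψ y) • fderiv ℝ Ψ y := by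
    filter_upwards [hΨ1.continuousAt.eventually hg, hΨ.eventually (by simp)] with y hgy hΨy
    exact (hgy.comp_hasFDerivAt y (hΨy.differentiableAt two_ne_zero).hasFDerivAt).fderiv
  ext i j
  have hpartial : DifferentiableAt ℝ (fun y => fderiv ℝ Ψ y (Pi.single j 1)) x :=
    ((hΨ.fderiv_right one_add_one_eq_two.le).differentiableAt one_ne_zero).clm_apply
      (differentiableAt_const _)
  have hprod : HasFDerivAt (fun y => g' (Ψ y) * fderiv ℝ Ψ y (Pi.single j 1)) _ x :=
    (hg'.comp_hasFDerivAt x hΨ1.hasFDerivAt).mul hpartial.hasFDerivAt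
  have hlocal : (fun y => fderiv ℝ (g ∘ Ψ) y (Pi.single j 1)) =ᶠ[𝓝 x]
      fun y => g' (Ψ y) * fderiv ℝ Ψ y (Pi.single j 1) := by
    filter_upwards [hfderiv] with y hy
    simp [hy]
  simp only [hess, of_apply, hlocal.fderiv_eq, hprod.fderiv]
  simp [grad, vecMulVec_apply]
  ring

theorem grad_const_mul_log_comp (c : ℝ) (hΨ : DifferentiableAt ℝ Ψ x) (hx : Ψ x ≠ 0) :
    grad (fun y => c * Real.log (Ψ y)) x = (c / Ψ x) • grad Ψ x :=
  grad_comp (g := fun t => c * Real.log t) ((Real.hasDerivAt_log hx).const_mul c) hΨ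

theorem hess_const_mul_log_comp (c : ℝ) (hΨ : ContDiffAt ℝ 2 Ψ x) (hx : Ψ x ≠ 0) :
    hess (fun y => c * Real.log (Ψ y)) x =
      (c / Ψ x) • hess Ψ x - (c / Ψ x ^ 2) • vecMulVec (grad Ψ x) (grad Ψ x) := by
  have hlog : ∀ᶠ t in 𝓝 (Ψ x), HasDerivAt (fun t => c * Real.log t) (c * t⁻¹) t := by
    filter_upwards [eventually_ne_nhds hx] with t ht
    exact (Real.hasDerivAt_log ht).const_mul c
  change hess ((fun t => c * Real.log t) ∘ Ψ) x = _
  rw [hess_comp hlog ((hasDerivAt_inv hx).const_mul c) hΨ]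
  simp only [div_eq_mul_inv, mul_neg, neg_smul, sub_eq_add_neg]

end Calculus

theorem Matrix.trace_vecMulVec_mul {ι : Type*} [Fintype ι] {R : Type*} [CommSemiring R]
    (a b : ι → R) (M : Matrix ι ι R) : (vecMulVec a b * M).trace = b ⬝ᵥ M *ᵥ a := by
  rw [vecMulVec_mul, trace_vecMulVec, dotProduct_mulVec, dotProduct_comm]

theorem mulVec_optimal_feedback {ι κ 𝕜 : Type*} [Fintype ι] [Fintype κ] [DecidableEq κ]
    [Field 𝕜] {lam : 𝕜} (hlam : lam ≠ 0) {G : Matrix ι κ 𝕜} {R : Matrix κ κ 𝕜}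
    {Sig : Matrix ι ι 𝕜} (hcompat : lam • (G * R⁻¹ * Gᵀ) = Sig) (v : ι → 𝕜) :
    G *ᵥ -((R⁻¹ * Gᵀ) *ᵥ v) = -(lam⁻¹ • Sig *ᵥ v) := by
  rw [← hcompat, smul_mulVec, smul_smul, inv_mul_cancel₀ hlam, one_smul, mulVec_neg,
    mulVec_mulVec, Matrix.mul_assoc]

theorem log_transform_generator_eq {ι : Type*} [Fintype ι] {lam s : ℝ} (hlam : lam ≠ 0)
    (hs : s ≠ 0) (f p : ι → ℝ) (H Sig : Matrix ι ι ℝ) :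
    ((-lam / s) • p) ⬝ᵥ (f + -(lam⁻¹ • Sig *ᵥ ((-lam / s) • p)))
        + (1 / 2) * (((-lam / s) • H - (-lam / s ^ 2) • vecMulVec p p) * Sig).trace =
      -(lam / s) * (f ⬝ᵥ p + (1 / 2) * (H * Sig).trace)
        - lam / (2 * s ^ 2) * (p ⬝ᵥ Sig *ᵥ p) := by
  simp only [sub_mul, smul_mul, trace_sub, trace_smul, trace_vecMulVec_mul, dotProduct_add,
    dotProduct_neg, mulVec_smul, smul_dotProduct, dotProduct_smul, dotProduct_comm f p,
    smul_eq_mul]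
  field_simp
  ring

theorem Matrix.PosSemidef.mul_mul_transpose_same {ι κ : Type*} [Fintype ι] [Fintype κ]
    {S : Matrix κ κ ℝ} (hS : S.PosSemidef) (B : Matrix ι κ ℝ) : (B * S * Bᵀ).PosSemidef := by
  simpa only [conjTranspose_eq_transpose_of_trivial] using hS.mul_mul_conjTranspose_same B

theorem generator_of_log_transform_nonpositive_general
    {n m l : ℕ} (lam : ℝ) (hlam : 0 < lam)
    (x : Fin n → ℝ) (Ψ : (Fin n → ℝ) → ℝ)
    (U : Set (Fin n → ℝ)) (hU : IsOpen U) (hxU : x ∈ U)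
    (hC2 : ContDiffOn ℝ 2 Ψ U) (hpos : ∀ y ∈ U, 0 < Ψ y)
    (q : ℝ) (hq : 0 ≤ q) (f : Fin n → ℝ)
    (G : Matrix (Fin n) (Fin m) ℝ) (B : Matrix (Fin n) (Fin l) ℝ)
    (R : Matrix (Fin m) (Fin m) ℝ)
    (Se : Matrix (Fin l) (Fin l) ℝ) (hSe : Se.PosSemidef)
    (Sig : Matrix (Fin n) (Fin n) ℝ)
    (hSig : Sig = B * Se * Bᵀ)
    (hcompat : lam • (G * R⁻¹ * Gᵀ) = B * Se * Bᵀ)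
    (hrelax : (1 / lam) * q * Ψ x - f ⬝ᵥ grad Ψ x
      - (1 / 2) * (hess Ψ x * Sig).trace ≤ 0)
    (V : (Fin n → ℝ) → ℝ) (hV : V = fun y => -lam * Real.log (Ψ y))
    (u : Fin m → ℝ) (hu : u = -((R⁻¹ * Gᵀ).mulVec (grad V x))) :
    grad V x ⬝ᵥ (f + G.mulVec u)
        + (1 / 2) * (hess V x * (B * Se * Bᵀ)).trace ≤
      -q - (lam / (2 * Ψ x ^ 2)) * (grad Ψ x ⬝ᵥ Sig.mulVec (grad Ψ x)) ∧
    -q - (lam / (2 * Ψ x ^ 2)) * (grad Ψ x ⬝ᵥ Sig.mulVec (grad Ψ x)) ≤ 0 := by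
  have hΨx : 0 < Ψ x := hpos x hxU
  have hC2x : ContDiffAt ℝ 2 Ψ x := hC2.contDiffAt (hU.mem_nhds hxU)
  subst hSig hV hu
  have hquad : 0 ≤ grad Ψ x ⬝ᵥ (B * Se * Bᵀ) *ᵥ grad Ψ x :=
    (hSe.mul_mul_transpose_same B).dotProduct_mulVec_nonneg _
  have hHJB : q ≤ lam / Ψ x * (f ⬝ᵥ grad Ψ x + (1 / 2) * (hess Ψ x * (B * Se * Bᵀ)).trace) :=
    calc q = lam / Ψ x * ((1 / lam) * q * Ψ x) := by field_simp
      _ ≤ _ := by gcongr; linarith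
  rw [mulVec_optimal_feedback hlam.ne' hcompat,
    grad_const_mul_log_comp _ (hC2x.differentiableAt two_ne_zero) hΨx.ne',
    hess_const_mul_log_comp _ hC2x hΨx.ne', log_transform_generator_eq hlam.ne' hΨx.ne']
  constructor
  · linarith
  · linarith [mul_nonneg (by positivity : 0 ≤ lam / (2 * Ψ x ^ 2)) hquad]

/-- Key inequality in the proof of Theorem 7: under the relaxed linear HJB inequality,
the generator of `V = -λ log Ψ` along the dynamics controlled by `u = -R⁻¹Gᵀ∇V(x)`
is bounded above by `-q - (λ/(2Ψ(x)²)) ∇Ψ(x)ᵀ Σ ∇Ψ(x) ≤ 0`. -/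
theorem generator_of_log_transform_nonpositive
    {n m l : ℕ} (lam : ℝ) (hlam : 0 < lam)
    (x : Fin n → ℝ) (Ψ : (Fin n → ℝ) → ℝ)
    (U : Set (Fin n → ℝ)) (hU : IsOpen U) (hxU : x ∈ U)
    (hC2 : ContDiffOn ℝ 2 Ψ U) (hpos : ∀ y ∈ U, 0 < Ψ y)
    (q : ℝ) (hq : 0 ≤ q) (f : Fin n → ℝ)
    (G : Matrix (Fin n) (Fin m) ℝ) (B : Matrix (Fin n) (Fin l) ℝ)
    (R : Matrix (Fin m) (Fin m) ℝ) (hR : R.PosDef)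
    (Se : Matrix (Fin l) (Fin l) ℝ) (hSe : Se.PosSemidef)
    (Sig : Matrix (Fin n) (Fin n) ℝ)
    (hSig : Sig = B * Se * Bᵀ)
    (hcompat : lam • (G * R⁻¹ * Gᵀ) = B * Se * Bᵀ)
    (hrelax : (1 / lam) * q * Ψ x - f ⬝ᵥ grad Ψ x
      - (1 / 2) * (hess Ψ x * Sig).trace ≤ 0)
    (V : (Fin n → ℝ) → ℝ) (hV : V = fun y => -lam * Real.log (Ψ y))
    (u : Fin m → ℝ) (hu : u = -((R⁻¹ * Gᵀ).mulVec (grad V x))) :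
    grad V x ⬝ᵥ (f + G.mulVec u)
        + (1 / 2) * (hess V x * (B * Se * Bᵀ)).trace ≤
      -q - (lam / (2 * Ψ x ^ 2)) * (grad Ψ x ⬝ᵥ Sig.mulVec (grad Ψ x)) ∧
    -q - (lam / (2 * Ψ x ^ 2)) * (grad Ψ x ⬝ᵥ Sig.mulVec (grad Ψ x)) ≤ 0 :=
  generator_of_log_transform_nonpositive_general lam hlam x Ψ U hU hxU hC2 hpos q hq f G B R Se hSe
    Sig hSig hcompat hrelax V hV u hu
end
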